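/- If σ ≺ τ and f(σ) ≥ f(τ) (i.e., (σ,τ) is a gradient pair of f), then the normalization satisfies h_f(σ) = h_f(τ). -/

import Mathlib

open Finset

variable {V : Type*}

/-- A finite abstract simplicial complex: a finite family of nonempty finite vertex sets
closed under passing to nonempty subsets. -/
def IsComplex [DecidableEq V] (K : Finset (Finset V)) : Prop :=
  (∀ σ ∈ K, σ.Nonempty) ∧ ∀ σ ∈ K, ∀ τ : Finset V, τ ⊆ σ → τ.Nonempty → τ ∈ K

/-- Dimension of a simplex. -/
def dimS (σ : Finset V) : ℕ := σ.card - 1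

/-- `σ` is an immediate face (facet) of `τ`. -/
def Facet [DecidableEq V] (σ τ : Finset V) : Prop := σ ⊆ τ ∧ σ.card + 1 = τ.card

instance [DecidableEq V] (σ τ : Finset V) : Decidable (Facet σ τ) := by
  unfold Facet; infer_instance

/-- A discrete (combinatorial) Morse function in the sense of Forman. -/
def IsMorse [DecidableEq V] {α : Type*} [LinearOrder α]
    (K : Finset (Finset V)) (f : Finset V → α) : Prop :=
  ∀ σ ∈ K,
    (K.filter (fun τ => Facet σ τ ∧ f τ ≤ f σ)).card ≤ 1 ∧
    (K.filter (fun ν => Facet ν σ ∧ f σ ≤ f ν)).card ≤ 1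

/-- Two discrete Morse functions are equivalent (induce the same gradient field). -/
def MorseEquiv [DecidableEq V] {α β : Type*} [LinearOrder α] [LinearOrder β]
    (K : Finset (Finset V)) (f : Finset V → α) (g : Finset V → β) : Prop :=
  ∀ σ ∈ K, ∀ τ ∈ K, Facet σ τ → (f σ < f τ ↔ g σ < g τ)

/-- A gradient pair of `f`. -/
def GradPair [DecidableEq V] (K : Finset (Finset V)) (f : Finset V → ℝ)
    (σ τ : Finset V) : Prop :=
  σ ∈ K ∧ τ ∈ K ∧ Facet σ τ ∧ f τ ≤ f σ

/-- The normalization `h_f` of a discrete Morse function `f`. -/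
noncomputable def normalization [DecidableEq V] (K : Finset (Finset V))
    (f : Finset V → ℝ) (σ : Finset V) : ℕ :=
  sInf {n : ℕ | ∃ g : Finset V → ℕ, IsMorse K g ∧ MorseEquiv K f g ∧ g σ = n}

/-- A critical simplex of `f`. -/
def IsCritical [DecidableEq V] {α : Type*} [LinearOrder α]
    (K : Finset (Finset V)) (f : Finset V → α) (σ : Finset V) : Prop :=
  σ ∈ K ∧ (∀ τ ∈ K, Facet σ τ → f σ < f τ) ∧ (∀ ν ∈ K, Facet ν σ → f ν < f σ)

instance [DecidableEq V] {α : Type*} [LinearOrder α]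
    (K : Finset (Finset V)) (f : Finset V → α) (σ : Finset V) :
    Decidable (IsCritical K f σ) := by
  unfold IsCritical; infer_instance

/-- The alternating sum of `h_f` over all simplices of `K`. -/
noncomputable def morseSum [DecidableEq V] (K : Finset (Finset V)) (f : Finset V → ℝ) : ℤ :=
  ∑ σ ∈ K, (-1 : ℤ) ^ (dimS σ) * (normalization K f σ : ℤ)

/-- The alternating sum of `h_f` over the critical simplices of `f`. -/
noncomputable def critSum [DecidableEq V] (K : Finset (Finset V)) (f : Finset V → ℝ) : ℤ :=
  ∑ σ ∈ K.filter (fun σ => IsCritical K f σ),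
    (-1 : ℤ) ^ (dimS σ) * (normalization K f σ : ℤ)

/-- Number of critical simplices of `f`. -/
noncomputable def numCritical [DecidableEq V] (K : Finset (Finset V)) (f : Finset V → ℝ) : ℕ :=
  (K.filter (fun σ => IsCritical K f σ)).card

/-- An optimal discrete Morse function minimizes the number of critical simplices. -/
def IsOptimal [DecidableEq V] (K : Finset (Finset V)) (f : Finset V → ℝ) : Prop :=
  IsMorse K f ∧ ∀ g : Finset V → ℝ, IsMorse K g → numCritical K f ≤ numCritical K g

/-- The invariant `𝔑(K)`: minimum of `|𝔑(K,f)|` over optimal Morse functions. -/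
noncomputable def NK [DecidableEq V] (K : Finset (Finset V)) : ℕ :=
  sInf {n : ℕ | ∃ f : Finset V → ℝ, IsOptimal K f ∧ n = (critSum K f).natAbs}

/-- An elementary collapse removing the free pair `(σ, τ)`. -/
def CollapseStep [DecidableEq V] (K K' : Finset (Finset V)) : Prop :=
  ∃ σ τ, σ ∈ K ∧ τ ∈ K ∧ Facet σ τ ∧ (∀ ρ ∈ K, σ ⊂ ρ → ρ = τ) ∧
    K' = (K.erase σ).erase τ

/-- Collapsibility: `K` collapses to a point by elementary collapses. -/
def Collapsible [DecidableEq V] (K : Finset (Finset V)) : Prop :=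
  ∃ v : V, Relation.ReflTransGen CollapseStep K {{v}}

/-- Connectivity of a complex. -/
def ComplexConnected [DecidableEq V] (K : Finset (Finset V)) : Prop :=
  K.Nonempty ∧ ∀ u v : V, {u} ∈ K → {v} ∈ K →
    Relation.ReflTransGen (fun a b => ({a, b} : Finset V) ∈ K) u v

/-- Signed incidence number `⟨∂τ, ν⟩` of an immediate face. -/
noncomputable def bsign [DecidableEq V] [LinearOrder V] (ν τ : Finset V) : ℝ :=
  if Facet ν τ then ∑ v ∈ τ \ ν, (-1 : ℝ) ^ ((τ.filter (fun u => u < v)).card) else 0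

/-- The simplicial boundary of a real chain `c` supported on `K`. -/
noncomputable def bnd [DecidableEq V] [LinearOrder V] (K : Finset (Finset V))
    (c : Finset V → ℝ) (ν : Finset V) : ℝ :=
  ∑ τ ∈ K, bsign ν τ * c τ

/-- A `k`-chain of `K`. -/
def IsChainOf (K : Finset (Finset V)) (k : ℕ) (c : Finset V → ℝ) : Prop :=
  ∀ τ, c τ ≠ 0 → τ ∈ K ∧ τ.card = k + 1

/-- `H₂(K; ℝ) = 0` for a complex of dimension `≤ 2`: every 2-cycle is zero. -/
def H2Zero [DecidableEq V] [LinearOrder V] (K : Finset (Finset V)) : Prop :=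
  ∀ c : Finset V → ℝ, IsChainOf K 2 c → (∀ ν, bnd K c ν = 0) → ∀ τ, c τ = 0

/-- `H₁(K; ℝ) = 0`: every 1-cycle is a boundary. -/
def H1Zero [DecidableEq V] [LinearOrder V] (K : Finset (Finset V)) : Prop :=
  ∀ c : Finset V → ℝ, IsChainOf K 1 c → (∀ ν, bnd K c ν = 0) →
    ∃ d : Finset V → ℝ, IsChainOf K 2 d ∧ ∀ ν, bnd K d ν = c ν

/-- Acyclicity (all reduced real homology vanishes) for a complex of dimension `≤ 2`. -/
def Acyclic [DecidableEq V] [LinearOrder V] (K : Finset (Finset V)) : Prop :=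
  ComplexConnected K ∧ H1Zero K ∧ H2Zero K

/-- Euler characteristic. -/
def eulerChar (K : Finset (Finset V)) : ℤ :=
  ∑ σ ∈ K, (-1 : ℤ) ^ (dimS σ)

/-- Gradient paths: `GPath K f σ₀ σᵣ p` says `p = [σ₀, τ₀, σ₁, τ₁, …, σᵣ]` is a gradient
path of `f` from `σ₀` to `σᵣ`. -/
inductive GPath [DecidableEq V] (K : Finset (Finset V)) (f : Finset V → ℝ) :
    Finset V → Finset V → List (Finset V) → Prop
  | nil : ∀ σ, σ ∈ K → GPath K f σ σ [σ]
  | cons : ∀ σ τ σ' e l, σ ∈ K → τ ∈ K → Facet σ τ → f τ ≤ f σ → Facet σ' τ → σ' ≠ σ →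
      GPath K f σ' e l → GPath K f σ e (σ :: τ :: l)

/-- Multiplicity (weight) of a gradient path, following Forman. -/
noncomputable def pweight [DecidableEq V] [LinearOrder V] : List (Finset V) → ℝ
  | σ :: τ :: rest => (-(bsign σ τ) * bsign rest.headI τ) * pweight rest
  | _ => 1

/-- The coefficient `λ^τ_σ` of `σ` in the Morse-complex boundary of `τ`. -/
noncomputable def morseCoeff [DecidableEq V] [LinearOrder V] (K : Finset (Finset V))
    (f : Finset V → ℝ) (τ σ : Finset V) : ℝ :=
  ∑ᶠ p ∈ {p : List (Finset V) | Facet p.headI τ ∧ GPath K f p.headI σ p},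
    bsign p.headI τ * pweight p

/-- One stellar subdivision step (at `σ`, with new vertex `v`). -/
def StellarStep (K K' : Finset (Finset ℕ)) : Prop :=
  ∃ σ v, σ ∈ K ∧ 2 ≤ σ.card ∧ (∀ τ ∈ K, v ∉ τ) ∧
    K' = K.filter (fun τ => ¬ σ ⊆ τ) ∪
      (K.filter (fun τ => σ ⊆ τ)).biUnion
        (fun τ => (σ.powerset.filter (fun μ => μ ≠ σ)).image
          (fun μ => insert v ((τ \ σ) ∪ μ)))

/-- Subdivisions (iterated stellar subdivisions). -/
def Subdivision (K L : Finset (Finset ℕ)) : Prop :=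
  Relation.ReflTransGen StellarStep K L

/-- `Ñ(K)`: the minimum of `𝔑(L)` over subdivisions `L` of `K`. -/
noncomputable def NtildeK (K : Finset (Finset ℕ)) : ℕ :=
  sInf {n : ℕ | ∃ L, Subdivision K L ∧ n = NK L}

/-! Equivalence to `f` is a system of difference constraints `g a + c ≤ g b` on `K`, and such
systems are closed under pointwise infima; hence `h_f` is itself the least `ℕ`-valued function
equivalent to `f`. Equivalence gives `h_f τ ≤ h_f σ`. Conversely, lowering `h_f` at `σ` to
`h_f τ` stays equivalent to `f` as soon as `h_f ν < h_f τ` for every `ν ≺ σ` with `f ν < f σ`.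
For such `ν`, the other facet `σ'` of `τ` containing `ν` satisfies `f σ' < f τ`, because `σ` is
the only facet paired with `τ`; and `h_f ν ≤ h_f σ'`, either because `f ν < f σ'` or, when
`(ν, σ')` is a gradient pair, by induction on `h_f τ`. -/

section Rank

variable {α : Type*} [LinearOrder α] {K : Finset (Finset V)} {f : Finset V → α}

def valueRank (K : Finset (Finset V)) (f : Finset V → α) (ρ : Finset V) : ℕ :=
  (K.filter fun μ => f μ < f ρ).card

lemma valueRank_lt_valueRank_iff {ν ρ : Finset V} (hν : ν ∈ K) :
    valueRank K f ν < valueRank K f ρ ↔ f ν < f ρ := by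
  constructor
  · intro h
    by_contra hle
    refine h.not_ge (card_le_card fun μ hμ => ?_)
    simp only [mem_filter] at hμ ⊢
    exact ⟨hμ.1, hμ.2.trans_le (not_lt.mp hle)⟩
  · intro h
    refine card_lt_card ⟨fun μ hμ => ?_, fun hsub => ?_⟩
    · simp only [mem_filter] at hμ ⊢
      exact ⟨hμ.1, hμ.2.trans h⟩
    · simpa using hsub (mem_filter.mpr ⟨hν, h⟩)

lemma morseEquiv_valueRank [DecidableEq V] : MorseEquiv K f (valueRank K f) :=
  fun _ hν _ _ _ => (valueRank_lt_valueRank_iff hν).symm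

end Rank

section

variable [DecidableEq V] {K : Finset (Finset V)}

lemma Facet.ne {σ τ : Finset V} (h : Facet σ τ) : σ ≠ τ := by
  rintro rfl
  exact absurd h.2 (Nat.succ_ne_self _)

lemma IsComplex.exists_facet_between (hK : IsComplex K) {ν σ τ : Finset V} (hτ : τ ∈ K)
    (hνσ : Facet ν σ) (hστ : Facet σ τ) :
    ∃ σ' ∈ K, Facet ν σ' ∧ Facet σ' τ ∧ σ' ≠ σ := by
  obtain ⟨y, hyτ, hyσ⟩ : ∃ y ∈ τ, y ∉ σ :=
    not_subset.mp fun h => hστ.ne (subset_antisymm hστ.1 h)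
  have hyν : y ∉ ν := fun h => hyσ (hνσ.1 h)
  have hsub : insert y ν ⊆ τ := insert_subset hyτ (hνσ.1.trans hστ.1)
  refine ⟨insert y ν, hK.2 τ hτ _ hsub (insert_nonempty y ν), ⟨subset_insert y ν, ?_⟩,
    ⟨hsub, ?_⟩, fun h => hyσ (h ▸ mem_insert_self y ν)⟩
  · rw [card_insert_of_notMem hyν]
  · rw [card_insert_of_notMem hyν, hνσ.2, hστ.2]

section Order

variable {α β : Type*} [LinearOrder α] [LinearOrder β] {f : Finset V → α}

lemma IsMorse.eq_of_facet_le (hf : IsMorse K f) {σ σ' τ : Finset V} (hσ : σ ∈ K)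
    (hσ' : σ' ∈ K) (hτ : τ ∈ K) (h : Facet σ τ) (h' : Facet σ' τ) (hle : f τ ≤ f σ)
    (hle' : f τ ≤ f σ') : σ = σ' :=
  card_le_one.mp (hf τ hτ).2 σ (by simp [hσ, h, hle]) σ' (by simp [hσ', h', hle'])

lemma IsMorse.eq_of_cofacet_le (hf : IsMorse K f) {σ τ τ' : Finset V} (hσ : σ ∈ K)
    (hτ : τ ∈ K) (hτ' : τ' ∈ K) (h : Facet σ τ) (h' : Facet σ τ') (hle : f τ ≤ f σ)
    (hle' : f τ' ≤ f σ) : τ = τ' :=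
  card_le_one.mp (hf σ hσ).1 τ (by simp [hτ, h, hle]) τ' (by simp [hτ', h', hle'])

lemma MorseEquiv.le_iff {g : Finset V → β} (he : MorseEquiv K f g) {σ τ : Finset V}
    (hσ : σ ∈ K) (hτ : τ ∈ K) (h : Facet σ τ) : f τ ≤ f σ ↔ g τ ≤ g σ := by
  simpa only [not_lt] using (he σ hσ τ hτ h).not

lemma IsMorse.of_morseEquiv {g : Finset V → β} (hf : IsMorse K f) (he : MorseEquiv K f g) :
    IsMorse K g := by
  intro σ hσ
  have hup : K.filter (fun τ => Facet σ τ ∧ g τ ≤ g σ) =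
      K.filter (fun τ => Facet σ τ ∧ f τ ≤ f σ) :=
    filter_congr fun τ hτ => and_congr_right fun h => (he.le_iff hσ hτ h).symm
  have hdown : K.filter (fun ν => Facet ν σ ∧ g σ ≤ g ν) =
      K.filter (fun ν => Facet ν σ ∧ f σ ≤ f ν) :=
    filter_congr fun ν hν => and_congr_right fun h => (he.le_iff hν hσ h).symm
  rw [hup, hdown]
  exact hf σ hσ

lemma MorseEquiv.update {g : Finset V → β} (he : MorseEquiv K f g) {σ : Finset V} {b : β}
    (hup : ∀ κ ∈ K, Facet σ κ → (f σ < f κ ↔ b < g κ))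
    (hdown : ∀ ν ∈ K, Facet ν σ → (f ν < f σ ↔ g ν < b)) :
    MorseEquiv K f (Function.update g σ b) := by
  intro ν hν κ hκ h
  rcases eq_or_ne ν σ with rfl | hνσ
  · simpa [Function.update_of_ne h.ne.symm] using hup κ hκ h
  rcases eq_or_ne κ σ with rfl | hκσ
  · simpa [Function.update_of_ne hνσ] using hdown ν hν h
  simpa [Function.update_of_ne hνσ, Function.update_of_ne hκσ] using he ν hν κ hκ h

end Order

variable {f : Finset V → ℝ} {g : Finset V → ℕ}

lemma normalization_le (hg : IsMorse K g) (he : MorseEquiv K f g) (ρ : Finset V) :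
    normalization K f ρ ≤ g ρ :=
  Nat.sInf_le ⟨g, hg, he, rfl⟩

lemma normalization_add_le (hf : IsMorse K f) {a b : Finset V} {c : ℕ}
    (h : ∀ g : Finset V → ℕ, IsMorse K g → MorseEquiv K f g → g a + c ≤ g b) :
    normalization K f a + c ≤ normalization K f b := by
  have hrank := hf.of_morseEquiv morseEquiv_valueRank
  refine le_csInf ⟨_, _, hrank, morseEquiv_valueRank, rfl⟩ ?_
  rintro _ ⟨g, hg, he, rfl⟩
  exact (Nat.add_le_add_right (normalization_le hg he a) c).trans (h g hg he)

lemma morseEquiv_normalization (hf : IsMorse K f) : MorseEquiv K f (normalization K f) := by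
  intro ν hν ρ hρ h
  constructor
  · intro hlt
    exact normalization_add_le (c := 1) hf fun g _ he => (he ν hν ρ hρ h).mp hlt
  · intro hlt
    by_contra hle
    refine hlt.not_ge ?_
    simpa using normalization_add_le (c := 0) hf fun g _ he =>
      (he.le_iff hν hρ h).mp (not_lt.mp hle)

lemma normalization_le_of_forall_facet_lt (hf : IsMorse K f) {σ τ : Finset V}
    (hp : GradPair K f σ τ)
    (hlow : ∀ ν ∈ K, Facet ν σ → f ν < f σ → normalization K f ν < normalization K f τ) :
    normalization K f σ ≤ normalization K f τ := by
  obtain ⟨hσ, hτ, hστ, hle⟩ := hp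
  set h := normalization K f
  have he := morseEquiv_normalization hf
  have hτσ : h τ ≤ h σ := (he.le_iff hσ hτ hστ).mp hle
  have he' : MorseEquiv K f (Function.update h σ (h τ)) := by
    refine he.update (fun κ hκ hσκ => ?_) (fun ν hν hνσ => ?_)
    · rcases eq_or_ne κ τ with rfl | hκτ
      · exact iff_of_false hle.not_gt (lt_irrefl _)
      have hlt : f σ < f κ :=
        not_le.mp fun h' => hκτ (hf.eq_of_cofacet_le hσ hκ hτ hσκ hστ h' hle)
      exact iff_of_true hlt (hτσ.trans_lt ((he σ hσ κ hκ hσκ).mp hlt))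
    · refine ⟨hlow ν hν hνσ, fun hlt => not_le.mp fun hge => hlt.not_ge ?_⟩
      exact hτσ.trans ((he.le_iff hν hσ hνσ).mp hge)
  simpa using normalization_le (hf.of_morseEquiv he') he' σ

theorem normalization_le_of_gradPair (hK : IsComplex K) (hf : IsMorse K f) {σ τ : Finset V}
    (hp : GradPair K f σ τ) : normalization K f σ ≤ normalization K f τ := by
  set h := normalization K f
  have he := morseEquiv_normalization hf
  induction hn : h τ using Nat.strong_induction_on generalizing σ τ with
  | _ n ih =>
  obtain ⟨hσ, hτ, hστ, hle⟩ := hp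
  rw [← hn]
  refine normalization_le_of_forall_facet_lt hf ⟨hσ, hτ, hστ, hle⟩ fun ν hν hνσ _ => ?_
  obtain ⟨σ', hσ', hνσ', hσ'τ, hne⟩ := hK.exists_facet_between hτ hνσ hστ
  have hσ'lt : h σ' < h τ := (he σ' hσ' τ hτ hσ'τ).mp <|
    not_le.mp fun h' => hne (hf.eq_of_facet_le hσ' hσ hτ hσ'τ hστ h' hle)
  have hνσ'le : h ν ≤ h σ' := by
    rcases lt_or_ge (f ν) (f σ') with hlt' | hge'
    · exact ((he ν hν σ' hσ' hνσ').mp hlt').le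
    · exact ih _ (hn ▸ hσ'lt) ⟨hν, hσ', hνσ', hge'⟩ rfl
  exact hνσ'le.trans_lt hσ'lt

end

theorem normalization_eq_on_gradPair_general {V : Type*} [DecidableEq V]
    (K : Finset (Finset V)) (hK : IsComplex K)
    (f : Finset V → ℝ) (hf : IsMorse K f)
    (σ τ : Finset V) (hσ : σ ∈ K) (hτ : τ ∈ K) (hft : Facet σ τ) (hge : f τ ≤ f σ) :
    normalization K f σ = normalization K f τ :=
  le_antisymm (normalization_le_of_gradPair hK hf ⟨hσ, hτ, hft, hge⟩)
    (((morseEquiv_normalization hf).le_iff hσ hτ hft).mp hge)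

/-- On a gradient pair `σ ≺ τ` with `f σ ≥ f τ`, `h_f σ = h_f τ`. -/
theorem normalization_eq_on_gradPair {V : Type*} [DecidableEq V]
    (K : Finset (Finset V)) (hK : IsComplex K) (hconn : ComplexConnected K)
    (f : Finset V → ℝ) (hf : IsMorse K f)
    (σ τ : Finset V) (hσ : σ ∈ K) (hτ : τ ∈ K) (hft : Facet σ τ) (hge : f τ ≤ f σ) :
    normalization K f σ = normalization K f τ :=
  normalization_eq_on_gradPair_general K hK f hf σ τ hσ hτ hft hge
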